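/- arXiv:2505.10606 — 2 statements merged into one kernel-verified Lean document; each statement's English description precedes it below -/
import Mathlib

section
/- Let Σ ⊇ {0,1} be a finite alphabet. No compact decoder-only Transformer over Σ eventually learns both the all-zero sequence 000… and the indicator sequence of the perfect squares (the sequence α ∈ {0,1}^ω with α_n = 1 if and only if n is a perfect square). -/
open Finset Filter

open Classical in
/-- Relative Hamming distance between two finite sequences. -/
noncomputable def relHamming {A : Type*} {n : ℕ} (α β : Fin n → A) : ℝ :=
  ((Finset.univ.filter (fun i => α i ≠ β i)).card : ℝ) / n

/-- Relative Hamming distance between two infinite sequences (1-indexed: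
position `n ≥ 1` of the sequence `α : ℕ → A` is `α n`). -/
noncomputable def relHammingInf {A : Type*} (α β : ℕ → A) : ℝ :=
  Filter.liminf
    (fun n : ℕ => relHamming (fun i : Fin n => α (i.val + 1)) (fun i : Fin n => β (i.val + 1)))
    Filter.atTop

/-- A `d`-dimensional decoder-only attention layer. -/
structure AttentionLayer (d : ℕ) where
  p : ℕ → ℕ → (Fin d → ℝ)
  val : (Fin d → ℝ) → (Fin d → ℝ)
  w : (Fin d → ℝ) → (Fin d → ℝ) → (Fin d → ℝ) → ℝ
  F : (Fin d → ℝ) → (Fin d → ℝ) → (Fin d → ℝ)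
  w_pos : ∀ x y z, 0 < w x y z
  val_cont : Continuous val
  w_cont : Continuous fun t : (Fin d → ℝ) × (Fin d → ℝ) × (Fin d → ℝ) => w t.1 t.2.1 t.2.2
  F_cont : Continuous fun t : (Fin d → ℝ) × (Fin d → ℝ) => F t.1 t.2

/-- A positional encoding is compact if its range is contained in a compact set. -/
def AttentionLayer.CompactPE {d : ℕ} (L : AttentionLayer d) : Prop :=
  ∃ K : Set (Fin d → ℝ), IsCompact K ∧ ∀ i j : ℕ, L.p i j ∈ K

/-- The `j`-th attention vector computed by the layer on input `x`. -/
noncomputable def AttentionLayer.attn {d : ℕ} (L : AttentionLayer d) {n : ℕ}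
    (x : Fin n → (Fin d → ℝ)) (j : Fin n) : Fin d → ℝ :=
  (∑ i ∈ Finset.Iic j, L.w (x i) (x j) (L.p i.val j.val))⁻¹ •
    ∑ i ∈ Finset.Iic j, L.w (x i) (x j) (L.p i.val j.val) • L.val (x i)

/-- The output sequence of the layer on input `x`. -/
noncomputable def AttentionLayer.apply {d : ℕ} (L : AttentionLayer d) {n : ℕ}
    (x : Fin n → (Fin d → ℝ)) : Fin n → (Fin d → ℝ) :=
  fun j => L.F (L.attn x j) (x j)

/-- `sim(x, x̂)`: the minimal `δ ≥ 0` such that `‖x_i − x̂_i‖ ≤ δ` for at least `(1−δ)n`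
indices `i`. -/
noncomputable def simDist {d n : ℕ} (x y : Fin n → (Fin d → ℝ)) : ℝ :=
  sInf {δ : ℝ | 0 ≤ δ ∧
    (1 - δ) * n ≤ ((Finset.univ.filter (fun i => ‖x i - y i‖ ≤ δ)).card : ℝ)}

/-- Sequential application of a list of attention layers. -/
noncomputable def applyLayers {d : ℕ} (Ls : List (AttentionLayer d)) {n : ℕ}
    (x : Fin n → (Fin d → ℝ)) : Fin n → (Fin d → ℝ) :=
  Ls.foldl (fun v L => L.apply v) x

/-- A decoder-only Transformer over a finite alphabet `A`. -/
structure Transformer (A : Type*) [Fintype A] (d : ℕ) where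
  embed : A → ℕ → (Fin d → ℝ)
  layers : List (AttentionLayer d)
  proj : (Fin d → ℝ) → (A → ℝ)
  proj_cont : Continuous proj
  proj_nonneg : ∀ y a, 0 ≤ proj y a
  proj_sum : ∀ y, ∑ a, proj y a = 1

/-- The output probability distribution (as a vector in `ℝ^A`) of the Transformer on a
nonempty input sequence. -/
noncomputable def Transformer.eval {A : Type*} [Fintype A] {d : ℕ} (T : Transformer A d)
    {n : ℕ} (α : Fin (n + 1) → A) : A → ℝ :=
  T.proj (applyLayers T.layers (fun j => T.embed (α j) j.val) (Fin.last n))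

/-- A Transformer is compact if its input embedding has range in a compact set and all of
its layers have compact positional encoding. -/
def Transformer.IsCompactT {A : Type*} [Fintype A] {d : ℕ} (T : Transformer A d) : Prop :=
  (∃ K : Set (Fin d → ℝ), IsCompact K ∧ ∀ (a : A) (i : ℕ), T.embed a i ∈ K) ∧
  ∀ L ∈ T.layers, L.CompactPE

/-- `T` eventually learns the infinite sequence `α` (1-indexed: position `n ≥ 1` is `α n`). -/
def EventuallyLearns {A : Type*} [Fintype A] {d : ℕ} (T : Transformer A d) (α : ℕ → A) :
    Prop :=
  ∃ ε : ℝ, 0 < ε ∧ ∃ n₀ : ℕ, ∀ n ≥ n₀, ∀ σ : A, σ ≠ α (n + 2) →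
    T.eval (fun i : Fin (n + 1) => α (i.val + 1)) σ + ε ≤
      T.eval (fun i : Fin (n + 1) => α (i.val + 1)) (α (n + 2))

/-!
A compact Transformer cannot tell apart two inputs that differ only on a set `S` of positions
of density zero, at positions outside `S`. In a layer every attention weight lies in a fixed
interval `[c, C]` with `c > 0`, because tokens and positional encodings range over compact sets;
so perturbing values and weights at a vanishing proportion of the positions moves the attention
average arbitrarily little, and uniform continuity on compact sets does the rest. Each layer costs
only finitely many further initial positions.

The prefix of the squares sequence of length `(k + 2)² - 1` differs from the all-zero prefix only
at squares and ends at a non-square, so the two next-token distributions are close, while one of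
them must favour `0` and the other `1` by a fixed margin.
-/

open Topology

section CenterMass

variable {ι E : Type*} [NormedAddCommGroup E] [NormedSpace ℝ E] {t : Finset ι}
  {w w' : ι → ℝ} {v v' : ι → E}

theorem norm_centerMass_le {B : ℝ} (hw : ∀ i ∈ t, 0 ≤ w i) (hW : 0 < ∑ i ∈ t, w i)
    (hv : ∀ i ∈ t, ‖v i‖ ≤ B) : ‖t.centerMass w v‖ ≤ B := by
  simpa using (convex_closedBall (0 : E) B).centerMass_mem hw hW (by simpa using hv)

theorem norm_centerMass_sub_centerMass_le (hW : ∑ i ∈ t, w i ≠ 0)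
    (hW' : ∑ i ∈ t, w' i ≠ 0) :
    ‖t.centerMass w v - t.centerMass w' v'‖ ≤ |∑ i ∈ t, w i|⁻¹ *
      ∑ i ∈ t, (|w i| * ‖v i - v' i‖ + |w i - w' i| * ‖v' i - t.centerMass w' v'‖) := by
  set m' := t.centerMass w' v'
  have hbalance : ∑ i ∈ t, w' i • (v' i - m') = 0 := by
    simp only [smul_sub, sum_sub_distrib, ← sum_smul, m', Finset.centerMass,
      smul_inv_smul₀ hW', sub_self]
  have key : (∑ i ∈ t, w i) • (t.centerMass w v - m') =
      ∑ i ∈ t, (w i • (v i - v' i) + (w i - w' i) • (v' i - m')) := by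
    calc (∑ i ∈ t, w i) • (t.centerMass w v - m') = ∑ i ∈ t, w i • (v i - m') := by
          simp only [smul_sub, Finset.centerMass, smul_inv_smul₀ hW, sum_sub_distrib, sum_smul]
      _ = ∑ i ∈ t, w i • (v i - m') - ∑ i ∈ t, w' i • (v' i - m') := by rw [hbalance, sub_zero]
      _ = _ := by rw [← sum_sub_distrib]; exact sum_congr rfl fun i _ => by module
  calc ‖t.centerMass w v - m'‖
        = |∑ i ∈ t, w i|⁻¹ * ‖(∑ i ∈ t, w i) • (t.centerMass w v - m')‖ := by
        rw [norm_smul, Real.norm_eq_abs, inv_mul_cancel_left₀ (abs_ne_zero.2 hW)]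
    _ ≤ _ := by
        rw [key]
        gcongr
        refine (norm_sum_le _ _).trans (sum_le_sum fun i _ => (norm_add_le _ _).trans ?_)
        simp only [norm_smul, Real.norm_eq_abs, le_refl]

theorem norm_centerMass_sub_centerMass_le_of_close {c C B ε θ : ℝ} (bad : ι → Prop)
    [DecidablePred bad] (ht : t.Nonempty) (hc : 0 < c) (hε : 0 ≤ ε)
    (hw : ∀ i ∈ t, w i ∈ Set.Icc c C) (hw' : ∀ i ∈ t, w' i ∈ Set.Icc c C)
    (hv : ∀ i ∈ t, ‖v i‖ ≤ B) (hv' : ∀ i ∈ t, ‖v' i‖ ≤ B)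
    (hclose : ∀ i ∈ t, ¬ bad i → |w i - w' i| ≤ ε ∧ ‖v i - v' i‖ ≤ ε)
    (hbad : (#{i ∈ t | bad i} : ℝ) ≤ θ * #t) :
    ‖t.centerMass w v - t.centerMass w' v'‖ ≤ ((C + 2 * B) * ε + 4 * B * C * θ) / c := by
  set m' := t.centerMass w' v'
  obtain ⟨i₀, hi₀⟩ := ht
  have hB : 0 ≤ B := (norm_nonneg _).trans (hv i₀ hi₀)
  have hC : 0 ≤ C := hc.le.trans ((hw i₀ hi₀).1.trans (hw i₀ hi₀).2)
  have hcard : (0 : ℝ) < #t := by exact_mod_cast card_pos.2 ⟨i₀, hi₀⟩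
  have hW : c * #t ≤ ∑ i ∈ t, w i := by
    simpa [mul_comm] using card_nsmul_le_sum t w c fun i hi => (hw i hi).1
  have hWpos : 0 < ∑ i ∈ t, w i := (mul_pos hc hcard).trans_le hW
  have hW' : 0 < ∑ i ∈ t, w' i := sum_pos (fun i hi => hc.trans_le (hw' i hi).1) ⟨i₀, hi₀⟩
  have hm' : ‖m'‖ ≤ B := norm_centerMass_le (fun i hi => hc.le.trans (hw' i hi).1) hW' hv'
  have hterm : ∀ i ∈ t, |w i| * ‖v i - v' i‖ + |w i - w' i| * ‖v' i - m'‖ ≤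
      (C + 2 * B) * ε + 4 * B * C * (if bad i then 1 else 0) := by
    intro i hi
    obtain ⟨hci, hCi⟩ := hw i hi
    obtain ⟨hci', hCi'⟩ := hw' i hi
    have hwi : |w i| ≤ C := abs_le.2 ⟨by linarith, hCi⟩
    have hv'm : ‖v' i - m'‖ ≤ 2 * B := (norm_sub_le _ _).trans (by linarith [hv' i hi])
    by_cases hi' : bad i
    · have hww : |w i - w' i| ≤ C := abs_sub_le_iff.2 ⟨by linarith, by linarith⟩
      have hvv : ‖v i - v' i‖ ≤ 2 * B := (norm_sub_le _ _).trans (by linarith [hv i hi, hv' i hi])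
      have := add_le_add (mul_le_mul hwi hvv (norm_nonneg _) hC)
        (mul_le_mul hww hv'm (norm_nonneg _) hC)
      have : 0 ≤ (C + 2 * B) * ε := by positivity
      simp only [hi', if_true]
      linarith
    · obtain ⟨hww, hvv⟩ := hclose i hi hi'
      have := add_le_add (mul_le_mul hwi hvv (norm_nonneg _) hC)
        (mul_le_mul hww hv'm (norm_nonneg _) hε)
      simp only [hi', if_false]
      linarith
  calc _ ≤ |∑ i ∈ t, w i|⁻¹ * ∑ i ∈ t, (|w i| * ‖v i - v' i‖ + |w i - w' i| * ‖v' i - m'‖) :=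
        norm_centerMass_sub_centerMass_le hWpos.ne' hW'.ne'
    _ ≤ (c * #t)⁻¹ * (#t * ((C + 2 * B) * ε + 4 * B * C * θ)) := by
        rw [abs_of_pos hWpos]
        gcongr
        refine (sum_le_sum hterm).trans ?_
        rw [sum_add_distrib, ← mul_sum, ← mul_sum, sum_boole]
        simp only [sum_const, nsmul_eq_mul]
        nlinarith [mul_le_mul_of_nonneg_left hbad (by positivity : 0 ≤ 4 * B * C)]
    _ = _ := by field_simp

end CenterMass

theorem IsCompact.exists_forall_mem_Icc_of_pos {X : Type*} [TopologicalSpace X] {s : Set X}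
    {f : X → ℝ} (hs : IsCompact s) (hf : ContinuousOn f s) (hpos : ∀ x ∈ s, 0 < f x) :
    ∃ c > 0, ∃ C > 0, ∀ x ∈ s, f x ∈ Set.Icc c C := by
  obtain ⟨c, hc, hcf⟩ := hs.exists_forall_le' hf hpos
  obtain ⟨C, hC, hCf⟩ := (hs.image_of_continuousOn hf).isBounded.exists_pos_norm_le
  exact ⟨c, hc, C, hC, fun x hx =>
    ⟨hcf x hx, (le_abs_self _).trans (hCf _ (Set.mem_image_of_mem f hx))⟩⟩

def HasDensityZero (S : Set ℕ) : Prop :=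
  Tendsto (fun J : ℕ => ((S ∩ Set.Iio J).ncard : ℝ) / J) atTop (𝓝 0)

namespace HasDensityZero

variable {S : Set ℕ}

theorem eventually_ncard_le (hS : HasDensityZero S) {θ : ℝ} (hθ : 0 < θ) :
    ∀ᶠ J : ℕ in atTop, ((S ∩ Set.Iio J).ncard : ℝ) ≤ θ * J := by
  filter_upwards [hS.eventually (ge_mem_nhds hθ), eventually_gt_atTop 0] with J hJ hJ0
  rwa [div_le_iff₀ (by exact_mod_cast hJ0)] at hJ

theorem union_Iio (hS : HasDensityZero S) (m : ℕ) : HasDensityZero (S ∪ Set.Iio m) := by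
  have hcard (J : ℕ) : ((S ∪ Set.Iio m) ∩ Set.Iio J).ncard ≤ (S ∩ Set.Iio J).ncard + m := by
    calc ((S ∪ Set.Iio m) ∩ Set.Iio J).ncard ≤ (S ∩ Set.Iio J ∪ Set.Iio m).ncard :=
          Set.ncard_le_ncard <| by
            rw [Set.union_inter_distrib_right]; gcongr; exact Set.inter_subset_left
      _ ≤ _ := (Set.ncard_union_le _ _).trans (by rw [Set.ncard_Iio_nat])
  refine squeeze_zero (fun J => by positivity) (fun J => ?_)
    (by simpa using hS.add (tendsto_const_div_atTop_nhds_zero_nat (m : ℝ)))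
  rw [← add_div]
  gcongr
  exact_mod_cast hcard J

end HasDensityZero

theorem hasDensityZero_setOf_exists_mul_self_eq_add_one :
    HasDensityZero {i | ∃ r, r * r = i + 1} := by
  have hcard (J : ℕ) : ({i | ∃ r, r * r = i + 1} ∩ Set.Iio J).ncard ≤ Nat.sqrt J := by
    calc _ ≤ ((fun r => r * r - 1) '' Set.Icc 1 (Nat.sqrt J)).ncard := by
          refine Set.ncard_le_ncard ?_ (Set.toFinite _)
          rintro i ⟨⟨r, hr⟩, hiJ⟩
          refine ⟨r, ⟨?_, Nat.le_sqrt.2 (by simp at hiJ; omega)⟩, by simp only; omega⟩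
          rcases r with _ | r <;> simp_all
      _ ≤ _ := (Set.ncard_image_le (Set.toFinite _)).trans (by simp)
  refine squeeze_zero (fun J => by positivity) (fun J => ?_)
    (tendsto_inv_atTop_zero.comp (Real.tendsto_sqrt_atTop.comp tendsto_natCast_atTop_atTop))
  rw [Function.comp_apply, Function.comp_apply, ← Real.sqrt_div_self]
  gcongr
  exact (Nat.cast_le.2 (hcard J)).trans Real.nat_sqrt_le_real_sqrt

theorem Fin.card_filter_Iic_le_ncard {n : ℕ} (j : Fin n) (T : Set ℕ) [DecidablePred (· ∈ T)] :
    (#((Iic j).filter fun i : Fin n => (i : ℕ) ∈ T) : ℝ) ≤ (T ∩ Set.Iio (j + 1)).ncard := by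
  rw [← card_map Fin.valEmbedding, ← Set.ncard_coe_finset]
  refine Nat.cast_le.2 (Set.ncard_le_ncard ?_ (Set.toFinite _))
  intro i hi
  simp only [coe_map, Set.mem_image, mem_coe, mem_filter, mem_Iic] at hi
  obtain ⟨i, ⟨hij, hiT⟩, rfl⟩ := hi
  exact ⟨hiT, Nat.lt_succ_of_le hij⟩

section SparseStability

variable {E : Type*} [PseudoMetricSpace E]

def CloseOutside {n : ℕ} (T : Set ℕ) (δ : ℝ) (x x' : Fin n → E) : Prop :=
  ∀ j : Fin n, (j : ℕ) ∉ T → dist (x j) (x' j) ≤ δ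

/-- Uniform continuity of a map on sequences for the distance that ignores the positions in `S`
and finitely many initial ones; the map may enlarge the ignored initial segment. -/
def SparselyStable (S : Set ℕ) (K : Set E) (Φ : ∀ n, (Fin n → E) → Fin n → E) : Prop :=
  ∀ η > 0, ∃ δ > 0, ∀ m : ℕ, ∃ m' : ℕ, ∀ n (x x' : Fin n → E),
    x ∈ Set.univ.pi (fun _ => K) → x' ∈ Set.univ.pi (fun _ => K) →
    CloseOutside (S ∪ Set.Iio m) δ x x' → CloseOutside (S ∪ Set.Iio m') η (Φ n x) (Φ n x')

theorem SparselyStable.comp {S : Set ℕ} {K K' : Set E} {Φ Ψ : ∀ n, (Fin n → E) → Fin n → E}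
    (hΨ : SparselyStable S K' Ψ) (hΦ : SparselyStable S K Φ)
    (hmaps : ∀ n, Set.MapsTo (Φ n) (Set.univ.pi fun _ => K) (Set.univ.pi fun _ => K')) :
    SparselyStable S K fun n => Ψ n ∘ Φ n := by
  intro η hη
  obtain ⟨δ₁, hδ₁, hΨ⟩ := hΨ η hη
  obtain ⟨δ, hδ, hΦ⟩ := hΦ δ₁ hδ₁
  refine ⟨δ, hδ, fun m => ?_⟩
  obtain ⟨m₁, hm₁⟩ := hΦ m
  obtain ⟨m', hm'⟩ := hΨ m₁
  exact ⟨m', fun n x x' hx hx' hxx' =>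
    hm' n _ _ (hmaps n hx) (hmaps n hx') (hm₁ n x x' hx hx' hxx')⟩

end SparseStability

namespace AttentionLayer

variable {d : ℕ} (L : AttentionLayer d) {K : Set (Fin d → ℝ)}

theorem attn_eq_centerMass {n : ℕ} (x : Fin n → Fin d → ℝ) (j : Fin n) :
    L.attn x j = (Iic j).centerMass (fun i => L.w (x i) (x j) (L.p i j)) (fun i => L.val (x i)) :=
  rfl

theorem norm_attn_le {n : ℕ} {x : Fin n → Fin d → ℝ} {B : ℝ} (hB : ∀ i, ‖L.val (x i)‖ ≤ B)
    (j : Fin n) : ‖L.attn x j‖ ≤ B :=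
  norm_centerMass_le (fun _ _ => (L.w_pos _ _ _).le)
    (sum_pos (fun _ _ => L.w_pos _ _ _) ⟨j, mem_Iic.2 le_rfl⟩) fun i _ => hB i

theorem exists_isCompact_mapsTo_apply (hK : IsCompact K) :
    ∃ K', IsCompact K' ∧
      ∀ n, Set.MapsTo (L.apply (n := n)) (Set.univ.pi fun _ => K) (Set.univ.pi fun _ => K') := by
  obtain ⟨B, hB⟩ := hK.exists_bound_of_continuousOn L.val_cont.continuousOn
  refine ⟨(fun t => L.F t.1 t.2) '' (Metric.closedBall 0 B ×ˢ K),
    ((isCompact_closedBall 0 B).prod hK).image L.F_cont, fun n x hx j _ => ?_⟩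
  have hxK (i : Fin n) : x i ∈ K := hx i (Set.mem_univ i)
  exact ⟨(L.attn x j, x j),
    ⟨mem_closedBall_zero_iff.2 (L.norm_attn_le (fun i => hB _ (hxK i)) j), hxK j⟩, rfl⟩

theorem exists_forall_weight_mem_Icc (hL : L.CompactPE) (hK : IsCompact K) :
    ∃ c > 0, ∃ C > 0, ∀ x ∈ K, ∀ y ∈ K, ∀ i j : ℕ, L.w x y (L.p i j) ∈ Set.Icc c C := by
  obtain ⟨Kp, hKp, hp⟩ := hL
  obtain ⟨c, hc, C, hC, hcC⟩ := (hK.prod (hK.prod hKp)).exists_forall_mem_Icc_of_pos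
    L.w_cont.continuousOn fun t _ => L.w_pos t.1 t.2.1 t.2.2
  exact ⟨c, hc, C, hC, fun x hx y hy i j => hcC (x, y, _) ⟨hx, hy, hp i j⟩⟩

theorem exists_weight_val_modulus (hL : L.CompactPE) (hK : IsCompact K) {ε : ℝ} (hε : 0 < ε) :
    ∃ δ > 0, ∀ x ∈ K, ∀ x' ∈ K, ∀ y ∈ K, ∀ y' ∈ K, dist x x' ≤ δ → dist y y' ≤ δ →
      ∀ i j : ℕ, |L.w x y (L.p i j) - L.w x' y' (L.p i j)| ≤ ε ∧
        ‖L.val x - L.val x'‖ ≤ ε := by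
  obtain ⟨Kp, hKp, hp⟩ := hL
  obtain ⟨δw, hδw, hw⟩ := Metric.uniformContinuousOn_iff_le.1
    ((hK.prod (hK.prod hKp)).uniformContinuousOn_of_continuous L.w_cont.continuousOn) ε hε
  obtain ⟨δv, hδv, hv⟩ := Metric.uniformContinuousOn_iff_le.1
    (hK.uniformContinuousOn_of_continuous L.val_cont.continuousOn) ε hε
  refine ⟨min δw δv, lt_min hδw hδv, fun x hx x' hx' y hy y' hy' hxx' hyy' i j => ⟨?_, ?_⟩⟩
  · rw [← Real.dist_eq]
    refine hw (x, y, L.p i j) ⟨hx, hy, hp i j⟩ (x', y', L.p i j) ⟨hx', hy', hp i j⟩ ?_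
    simp only [Prod.dist_eq, dist_self]
    exact max_le (hxx'.trans (min_le_left _ _)) (max_le (hyy'.trans (min_le_left _ _)) hδw.le)
  · rw [← dist_eq_norm]
    exact hv x hx x' hx' (hxx'.trans (min_le_right _ _))

theorem sparselyStable_apply (hL : L.CompactPE) (hK : IsCompact K) {S : Set ℕ}
    (hS : HasDensityZero S) : SparselyStable S K fun _ => L.apply := by
  classical
  obtain ⟨c, hc, C, hC, hw⟩ := L.exists_forall_weight_mem_Icc hL hK
  obtain ⟨B, hB, hBv⟩ :=
    (hK.image_of_continuousOn L.val_cont.continuousOn).isBounded.exists_pos_norm_le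
  intro η hη
  obtain ⟨η₂, hη₂, hF⟩ := Metric.uniformContinuousOn_iff_le.1
    (((isCompact_closedBall 0 B).prod hK).uniformContinuousOn_of_continuous
      L.F_cont.continuousOn) η hη
  set ε := c * η₂ / (2 * (C + 2 * B))
  set θ := c * η₂ / (8 * B * C)
  have hε : 0 < ε := by positivity
  have hθ : 0 < θ := by positivity
  have hεθ : ((C + 2 * B) * ε + 4 * B * C * θ) / c = η₂ := by
    simp only [ε, θ]; field_simp; ring
  obtain ⟨δ, hδ, hmod⟩ := L.exists_weight_val_modulus hL hK hε
  refine ⟨min δ η₂, lt_min hδ hη₂, fun m => ?_⟩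
  obtain ⟨m', hm'⟩ := eventually_atTop.1
    (((hS.union_Iio m).eventually_ncard_le hθ).and (eventually_ge_atTop m))
  refine ⟨m', fun n x x' hx hx' hxx' j hj => ?_⟩
  have hxK (i : Fin n) : x i ∈ K := hx i (Set.mem_univ i)
  have hx'K (i : Fin n) : x' i ∈ K := hx' i (Set.mem_univ i)
  have hv {y : Fin n → Fin d → ℝ} (hy : ∀ i, y i ∈ K) (i : Fin n) : ‖L.val (y i)‖ ≤ B :=
    hBv _ (Set.mem_image_of_mem _ (hy i))
  have hjm' : m' ≤ j := not_lt.1 fun h => hj (Or.inr h)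
  have hxj : dist (x j) (x' j) ≤ min δ η₂ :=
    hxx' j fun h => hj (Set.union_subset_union_right S (Set.Iio_subset_Iio (hm' m' le_rfl).2) h)
  have hattn : ‖L.attn x j - L.attn x' j‖ ≤ η₂ := by
    rw [attn_eq_centerMass, attn_eq_centerMass, ← hεθ]
    refine norm_centerMass_sub_centerMass_le_of_close (fun i : Fin n => (i : ℕ) ∈ S ∪ Set.Iio m)
      ⟨j, mem_Iic.2 le_rfl⟩ hc hε.le (fun i _ => hw _ (hxK i) _ (hxK j) i j)
      (fun i _ => hw _ (hx'K i) _ (hx'K j) i j) (fun i _ => hv hxK i) (fun i _ => hv hx'K i)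
      (fun i _ hi => hmod _ (hxK i) _ (hx'K i) _ (hxK j) _ (hx'K j)
        ((hxx' i hi).trans (min_le_left _ _)) (hxj.trans (min_le_left _ _)) i j) ?_
    calc _ ≤ (((S ∪ Set.Iio m) ∩ Set.Iio (j + 1)).ncard : ℝ) := Fin.card_filter_Iic_le_ncard j _
      _ ≤ θ * (j + 1 : ℕ) := (hm' (j + 1) (by omega)).1
      _ = θ * #(Iic j) := by rw [Fin.card_Iic]
  exact hF (L.attn x j, x j) ⟨mem_closedBall_zero_iff.2 (L.norm_attn_le (hv hxK) j), hxK j⟩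
    (L.attn x' j, x' j) ⟨mem_closedBall_zero_iff.2 (L.norm_attn_le (hv hx'K) j), hx'K j⟩
    (by rw [Prod.dist_eq, dist_eq_norm]; exact max_le hattn (hxj.trans (min_le_right _ _)))

end AttentionLayer

section Layers

variable {d : ℕ}

theorem exists_isCompact_mapsTo_applyLayers (Ls : List (AttentionLayer d))
    {K : Set (Fin d → ℝ)} (hK : IsCompact K) :
    ∃ K', IsCompact K' ∧ ∀ n,
      Set.MapsTo (applyLayers Ls (n := n)) (Set.univ.pi fun _ => K) (Set.univ.pi fun _ => K') := by
  induction Ls generalizing K with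
  | nil => exact ⟨K, hK, fun _ => Set.mapsTo_id _⟩
  | cons L Ls ih =>
    obtain ⟨K₁, hK₁, hL⟩ := L.exists_isCompact_mapsTo_apply hK
    obtain ⟨K', hK', hLs⟩ := ih hK₁
    exact ⟨K', hK', fun n => (hLs n).comp (hL n)⟩

theorem sparselyStable_applyLayers {Ls : List (AttentionLayer d)}
    (hLs : ∀ L ∈ Ls, L.CompactPE) {K : Set (Fin d → ℝ)} (hK : IsCompact K) {S : Set ℕ}
    (hS : HasDensityZero S) : SparselyStable S K fun _ => applyLayers Ls := by
  induction Ls generalizing K with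
  | nil => exact fun η hη => ⟨η, hη, fun m => ⟨m, fun _ _ _ _ _ h => h⟩⟩
  | cons L Ls ih =>
    obtain ⟨K₁, hK₁, hL⟩ := L.exists_isCompact_mapsTo_apply hK
    exact (ih (fun L' hL' => hLs L' (List.mem_cons_of_mem _ hL')) hK₁).comp
      (L.sparselyStable_apply (hLs L List.mem_cons_self) hK hS) hL

end Layers

theorem Transformer.IsCompactT.exists_dist_eval_le {A : Type*} [Fintype A] {d : ℕ}
    {T : Transformer A d} (hT : T.IsCompactT) {S : Set ℕ} (hS : HasDensityZero S) {ε : ℝ}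
    (hε : 0 < ε) : ∃ N, ∀ n ≥ N, n ∉ S → ∀ a b : Fin (n + 1) → A,
      (∀ j : Fin (n + 1), (j : ℕ) ∉ S → a j = b j) → dist (T.eval a) (T.eval b) ≤ ε := by
  obtain ⟨⟨Ke, hKe, hembed⟩, hpe⟩ := hT
  obtain ⟨K', hK', hmaps⟩ := exists_isCompact_mapsTo_applyLayers T.layers hKe
  obtain ⟨η, hη, hproj⟩ := Metric.uniformContinuousOn_iff_le.1
    (hK'.uniformContinuousOn_of_continuous T.proj_cont.continuousOn) ε hε
  obtain ⟨δ, hδ, hstable⟩ := sparselyStable_applyLayers hpe hKe hS η hη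
  obtain ⟨N, hN⟩ := hstable 0
  refine ⟨N, fun n hn hnS a b hab => ?_⟩
  have hx (c : Fin (n + 1) → A) : (fun j => T.embed (c j) j) ∈ Set.univ.pi fun _ => Ke :=
    fun j _ => hembed _ _
  have hclose : CloseOutside (S ∪ Set.Iio 0) δ (fun j => T.embed (a j) j)
      (fun j => T.embed (b j) j) := fun j hj => by
    simp [hab j fun h => hj (Or.inl h), hδ.le]
  exact hproj _ (hmaps _ (hx a) _ trivial) _ (hmaps _ (hx b) _ trivial)
    (hN _ _ _ (hx a) (hx b) hclose (Fin.last n) (by simp [hnS, hn]))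

/-- No compact decoder-only Transformer eventually learns both the all-zero sequence and
the indicator sequence of the perfect squares. -/
theorem no_learn_zero_and_squares {A : Type*} [Fintype A] (zero one : A)
    (h01 : zero ≠ one) (α : ℕ → A)
    (hα : ∀ n : ℕ, 1 ≤ n →
      ((∃ m : ℕ, m * m = n) → α n = one) ∧ (¬ (∃ m : ℕ, m * m = n) → α n = zero))
    {d : ℕ} (T : Transformer A d) (hT : T.IsCompactT) :
    ¬ (EventuallyLearns T (fun _ => zero) ∧ EventuallyLearns T α) := by
  rintro ⟨⟨ε₀, hε₀, n₀, h₀⟩, ⟨ε₁, hε₁, n₁, h₁⟩⟩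
  obtain ⟨N, hN⟩ := hT.exists_dist_eval_le hasDensityZero_setOf_exists_mul_self_eq_add_one
    (half_pos (lt_min hε₀ hε₁))
  set k := N + n₀ + n₁
  set n := k * k + 4 * k + 2 with hn
  have hkn : k ≤ n := by nlinarith
  have hnS : ¬ ∃ r, r * r = n + 1 := Nat.not_exists_sq (m := k + 1) (by nlinarith) (by nlinarith)
  have hsq : α (n + 2) = one := (hα _ (by omega)).1 ⟨k + 2, by ring⟩
  have hd := hN n (by omega) hnS (fun i => α (i + 1)) (fun _ => zero)
    fun j hj => (hα _ (by omega)).2 hj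
  have hd₀ := (dist_le_pi_dist _ _ zero).trans hd
  have hd₁ := (dist_le_pi_dist _ _ one).trans hd
  have h₀ := h₀ n (by omega) one h01.symm
  have h₁ := h₁ n (by omega) zero (hsq ▸ h01)
  rw [hsq] at h₁
  rw [Real.dist_eq, abs_le] at hd₀ hd₁
  linarith [min_le_left ε₀ ε₁, min_le_right ε₀ ε₁]
end

section
/- Let Σ ⊇ {0,1} be a finite alphabet. No compact decoder-only Transformer over Σ eventually learns both the all-zero sequence 000… and the indicator sequence of the powers of 2 (the sequence α ∈ {0,1}^ω with α_n = 1 if and only if n is a power of 2). -/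
open Finset Filter

/-! A compact Transformer is insensitive to sparse changes of its input. By compactness, the
attention weights of every layer lie in a fixed interval `[w_min, w_max]` with `w_min > 0` and the
values are bounded, so changing the inputs at a set `B` of earlier positions moves the attention
average at position `j` by `O(#B / j)`, plus a term that is small when the other inputs move
little. Uniform continuity of the activations and of the output map carries this through all
layers. The prefix of length `2 ^ m - 1` of the powers-of-two sequence differs from the all-zero
prefix in only `m` positions, so the two predictions for position `2 ^ m` are nearly equal,
whereas learning both sequences forces predicting `0` after one prefix and `1` after the other
with a fixed margin. -/

def SeqMapsTo {X Y : Type*} (f : ∀ {n : ℕ}, (Fin n → X) → Fin n → Y) (K : Set X)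
    (K' : Set Y) : Prop :=
  ∀ {n : ℕ} (x : Fin n → X), (∀ i, x i ∈ K) → ∀ j, f x j ∈ K'

section SparseStable

variable {X Y Z : Type*} [PseudoMetricSpace X] [PseudoMetricSpace Y] [PseudoMetricSpace Z]

def SparseStable (f : ∀ {n : ℕ}, (Fin n → X) → Fin n → Y) (K : Set X) : Prop :=
  ∀ ε > 0, ∃ η > 0, ∃ c : ℕ, ∀ {n : ℕ} (x x' : Fin n → X), (∀ i, x i ∈ K) → (∀ i, x' i ∈ K) →
    ∀ B : Finset (Fin n), (∀ i ∉ B, dist (x i) (x' i) ≤ η) →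
    ∀ j ∉ B, c * #B ≤ (j : ℕ) → dist (f x j) (f x' j) ≤ ε

theorem SparseStable.id (K : Set X) : SparseStable (fun x j => x j) K :=
  fun ε hε => ⟨ε, hε, 0, fun _ _ _ _ _ hB j hj _ => hB j hj⟩

theorem SparseStable.prod {f : ∀ {n : ℕ}, (Fin n → X) → Fin n → Y}
    {g : ∀ {n : ℕ}, (Fin n → X) → Fin n → Z} {K : Set X}
    (hf : SparseStable f K) (hg : SparseStable g K) :
    SparseStable (fun x j => (f x j, g x j)) K := by
  intro ε hε
  obtain ⟨η₁, hη₁, c₁, hf⟩ := hf ε hε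
  obtain ⟨η₂, hη₂, c₂, hg⟩ := hg ε hε
  refine ⟨min η₁ η₂, lt_min hη₁ hη₂, max c₁ c₂, fun x x' hx hx' B hB j hj hc => ?_⟩
  have hc₁ : c₁ * #B ≤ j := le_trans (Nat.mul_le_mul_right _ (le_max_left _ _)) hc
  have hc₂ : c₂ * #B ≤ j := le_trans (Nat.mul_le_mul_right _ (le_max_right _ _)) hc
  exact max_le
    (hf x x' hx hx' B (fun i hi => (hB i hi).trans (min_le_left _ _)) j hj hc₁)
    (hg x x' hx hx' B (fun i hi => (hB i hi).trans (min_le_right _ _)) j hj hc₂)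

theorem SparseStable.comp_uniformContinuousOn {f : ∀ {n : ℕ}, (Fin n → X) → Fin n → Y}
    {g : Y → Z} {K : Set X} {K' : Set Y} (hf : SparseStable f K) (hfK : SeqMapsTo f K K')
    (hg : UniformContinuousOn g K') : SparseStable (fun x j => g (f x j)) K := by
  intro ε hε
  obtain ⟨δ, hδ, hg⟩ := Metric.uniformContinuousOn_iff_le.1 hg ε hε
  obtain ⟨η, hη, c, hf⟩ := hf δ hδ
  exact ⟨η, hη, c, fun x x' hx hx' B hB j hj hc =>
    hg _ (hfK x hx j) _ (hfK x' hx' j) (hf x x' hx hx' B hB j hj hc)⟩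

/-- Stability survives composition because the positions where the first map may fail to be
`η`-close, namely `B` and the first `c * #B` positions, still form a sparse set. -/
theorem SparseStable.comp {f : ∀ {n : ℕ}, (Fin n → X) → Fin n → Y}
    {g : ∀ {n : ℕ}, (Fin n → Y) → Fin n → Z} {K : Set X} {K' : Set Y}
    (hg : SparseStable g K') (hf : SparseStable f K) (hfK : SeqMapsTo f K K') :
    SparseStable (fun x => g (f x)) K := by
  intro ε hε
  obtain ⟨η₁, hη₁, c₁, hg⟩ := hg ε hε
  obtain ⟨η, hη, c, hf⟩ := hf η₁ hη₁
  refine ⟨η, hη, max c (c₁ * (c + 1)), fun {n} x x' hx hx' B hB j hj hcj => ?_⟩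
  classical
  set B' : Finset (Fin n) := B ∪ ({i | (i : ℕ) < c * #B} : Finset (Fin n))
  have hcB : c * #B ≤ j := le_trans (Nat.mul_le_mul_right _ (le_max_left _ _)) hcj
  have hfB' : ∀ i ∉ B', dist (f x i) (f x' i) ≤ η₁ := by
    intro i hi
    simp only [B', mem_union, mem_filter_univ, not_or, not_lt] at hi
    exact hf x x' hx hx' B hB i hi.1 hi.2
  have hjB' : j ∉ B' := by
    simp only [B', mem_union, mem_filter_univ, not_or, not_lt]
    exact ⟨hj, hcB⟩
  have hcardB' : #B' ≤ (c + 1) * #B :=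
    calc #B' ≤ #B + #{i : Fin n | (i : ℕ) < c * #B} := card_union_le _ _
      _ ≤ #B + c * #B := by rw [Fin.card_filter_val_lt]; omega
      _ = (c + 1) * #B := by ring
  refine hg (f x) (f x') (hfK x hx) (hfK x' hx') B' hfB' j hjB' ?_
  calc c₁ * #B' ≤ c₁ * ((c + 1) * #B) := Nat.mul_le_mul_left _ hcardB'
    _ = c₁ * (c + 1) * #B := by ring
    _ ≤ j := le_trans (Nat.mul_le_mul_right _ (le_max_right _ _)) hcj

end SparseStable

theorem Finset.norm_centerMass_sub_centerMass_le {ι E : Type*} [SeminormedAddCommGroup E]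
    [NormedSpace ℝ E] (s : Finset ι) {u u' : ι → ℝ} (v v' : ι → E)
    (hu : 0 < ∑ i ∈ s, u i) (hu' : ∑ i ∈ s, u' i ≠ 0) :
    ‖s.centerMass u v - s.centerMass u' v'‖ ≤ (∑ i ∈ s, u i)⁻¹ *
      ∑ i ∈ s, (|u i| * ‖v i - v' i‖ + |u i - u' i| * ‖v' i - s.centerMass u' v'‖) := by
  set a' := s.centerMass u' v'
  have hsum : (∑ i ∈ s, u i) • s.centerMass u v = ∑ i ∈ s, u i • v i :=
    smul_inv_smul₀ hu.ne' _
  have hsum' : ∑ i ∈ s, u' i • v' i = (∑ i ∈ s, u' i) • a' := (smul_inv_smul₀ hu' _).symm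
  -- `a'` is the `u'`-average of `v'`, so `∑ u' i • (v' i - a')` vanishes.
  have key : (∑ i ∈ s, u i) • (s.centerMass u v - a') =
      ∑ i ∈ s, (u i • (v i - v' i) + (u i - u' i) • (v' i - a')) := by
    simp only [smul_sub, sub_smul, sum_add_distrib, sum_sub_distrib, ← sum_smul, hsum, hsum']
    abel
  calc ‖s.centerMass u v - a'‖
      = (∑ i ∈ s, u i)⁻¹ * ‖(∑ i ∈ s, u i) • (s.centerMass u v - a')‖ := by
        rw [norm_smul, Real.norm_of_nonneg hu.le, inv_mul_cancel_left₀ hu.ne']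
    _ ≤ _ := by
        rw [key]
        gcongr
        refine (norm_sum_le _ _).trans (sum_le_sum fun i _ => (norm_add_le _ _).trans ?_)
        simp only [norm_smul, Real.norm_eq_abs, le_refl]

theorem Finset.sum_le_card_mul_add_card_mul {ι : Type*} (s B : Finset ι) {f : ι → ℝ} {ρ M : ℝ}
    (hρ : 0 ≤ ρ) (hM : 0 ≤ M) (hgood : ∀ i ∈ s, i ∉ B → f i ≤ ρ) (hbad : ∀ i ∈ s, f i ≤ M) :
    ∑ i ∈ s, f i ≤ #s * ρ + #B * M := by
  classical
  rw [← sum_inter_add_sum_sdiff s B, add_comm (#s * ρ)]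
  gcongr
  · calc ∑ i ∈ s ∩ B, f i ≤ #(s ∩ B) * M := by
          simpa using sum_le_card_nsmul _ _ _ fun i hi => hbad i (mem_inter.1 hi).1
      _ ≤ #B * M := by gcongr; exact inter_subset_right
  · calc ∑ i ∈ s \ B, f i ≤ #(s \ B) * ρ := by
          simpa using sum_le_card_nsmul _ _ _ fun i hi =>
            hgood i (mem_sdiff.1 hi).1 (mem_sdiff.1 hi).2
      _ ≤ #s * ρ := by gcongr; exact sdiff_subset

theorem Finset.norm_centerMass_sub_centerMass_le_of_sparse {ι E : Type*}
    [SeminormedAddCommGroup E] [NormedSpace ℝ E] {s B : Finset ι} {u u' : ι → ℝ}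
    {v v' : ι → E} {wmin wmax V ρ : ℝ} (hs : s.Nonempty) (hwmin : 0 < wmin)
    (hu : ∀ i ∈ s, wmin ≤ u i ∧ u i ≤ wmax) (hu' : ∀ i ∈ s, wmin ≤ u' i ∧ u' i ≤ wmax)
    (hv : ∀ i ∈ s, ‖v i‖ ≤ V) (hv' : ∀ i ∈ s, ‖v' i‖ ≤ V) (hρ : 0 ≤ ρ)
    (hclose : ∀ i ∈ s, i ∉ B → |u i - u' i| ≤ ρ ∧ ‖v i - v' i‖ ≤ ρ) :
    ‖s.centerMass u v - s.centerMass u' v'‖ ≤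
      (#s * (ρ * (wmax + 2 * V)) + #B * (6 * V * wmax)) / (#s * wmin) := by
  set a' := s.centerMass u' v'
  have hW : #s * wmin ≤ ∑ i ∈ s, u i := by
    simpa using card_nsmul_le_sum s u wmin fun i hi => (hu i hi).1
  have hW0 : 0 < #s * wmin := by have := hs.card_pos; positivity
  have hW' : 0 < ∑ i ∈ s, u' i := sum_pos (fun i hi => hwmin.trans_le (hu' i hi).1) hs
  have ha' : ‖a'‖ ≤ V := mem_closedBall_zero_iff.1 <| (convex_closedBall 0 V).centerMass_mem
    (fun i hi => hwmin.le.trans (hu' i hi).1) hW' fun i hi => mem_closedBall_zero_iff.2 (hv' i hi)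
  have hV : 0 ≤ V := (norm_nonneg _).trans ha'
  have hwmax : 0 ≤ wmax := by
    obtain ⟨i, hi⟩ := hs
    linarith [hu i hi]
  have habs : ∀ i ∈ s, |u i| ≤ wmax := fun i hi =>
    (abs_of_pos (hwmin.trans_le (hu i hi).1)).trans_le (hu i hi).2
  have hterm : ∀ i ∈ s, |u i| * ‖v i - v' i‖ + |u i - u' i| * ‖v' i - a'‖ ≤ 6 * V * wmax := by
    intro i hi
    have hdv : ‖v i - v' i‖ ≤ 2 * V := (norm_sub_le _ _).trans (by linarith [hv i hi, hv' i hi])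
    have hdv' : ‖v' i - a'‖ ≤ 2 * V := (norm_sub_le _ _).trans (by linarith [hv' i hi])
    have hdu : |u i - u' i| ≤ 2 * wmax :=
      abs_sub_le_iff.2 (by constructor <;> linarith [hu i hi, hu' i hi])
    calc _ ≤ wmax * (2 * V) + 2 * wmax * (2 * V) := by gcongr; exact habs i hi
      _ = 6 * V * wmax := by ring
  have hterm_good : ∀ i ∈ s, i ∉ B →
      |u i| * ‖v i - v' i‖ + |u i - u' i| * ‖v' i - a'‖ ≤ ρ * (wmax + 2 * V) := by
    intro i hi hiB
    have hdv' : ‖v' i - a'‖ ≤ 2 * V := (norm_sub_le _ _).trans (by linarith [hv' i hi])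
    calc _ ≤ wmax * ρ + ρ * (2 * V) := by
          gcongr
          exacts [habs i hi, (hclose i hi hiB).2, (hclose i hi hiB).1]
      _ = ρ * (wmax + 2 * V) := by ring
  calc ‖s.centerMass u v - a'‖
      ≤ (∑ i ∈ s, u i)⁻¹ * ∑ i ∈ s, (|u i| * ‖v i - v' i‖ + |u i - u' i| * ‖v' i - a'‖) :=
        s.norm_centerMass_sub_centerMass_le v v' (hW0.trans_le hW) hW'.ne'
    _ ≤ (#s * wmin)⁻¹ * (#s * (ρ * (wmax + 2 * V)) + #B * (6 * V * wmax)) := by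
        gcongr
        exact sum_le_card_mul_add_card_mul _ _ (by positivity) (by positivity) hterm_good hterm
    _ = _ := inv_mul_eq_div _ _

namespace AttentionLayer

variable {d : ℕ} (L : AttentionLayer d)

theorem seqMapsTo_attn_closedBall {K : Set (Fin d → ℝ)} {V : ℝ}
    (hV : ∀ y ∈ K, ‖L.val y‖ ≤ V) : SeqMapsTo L.attn K (Metric.closedBall 0 V) :=
  fun _ hx j => (convex_closedBall 0 V).centerMass_mem (fun _ _ => (L.w_pos _ _ _).le)
    (sum_pos (fun _ _ => L.w_pos _ _ _) ⟨j, mem_Iic.2 le_rfl⟩)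
    (fun i _ => mem_closedBall_zero_iff.2 (hV _ (hx i)))

theorem exists_isCompact_seqMapsTo_apply {K : Set (Fin d → ℝ)} (hK : IsCompact K) :
    ∃ K', IsCompact K' ∧ SeqMapsTo L.apply K K' := by
  obtain ⟨V, hV⟩ := hK.exists_bound_of_continuousOn L.val_cont.continuousOn
  exact ⟨_, ((isCompact_closedBall 0 V).prod hK).image L.F_cont,
    fun x hx j => ⟨(L.attn x j, x j), ⟨L.seqMapsTo_attn_closedBall hV x hx j, hx j⟩, rfl⟩⟩

theorem sparseStable_attn (hL : L.CompactPE) {K : Set (Fin d → ℝ)} (hK : IsCompact K) :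
    SparseStable L.attn K := by
  obtain ⟨P, hP, hpP⟩ := hL
  have hQ : IsCompact (K ×ˢ K ×ˢ P) := hK.prod (hK.prod hP)
  have hmemQ : ∀ {n : ℕ} (x : Fin n → Fin d → ℝ), (∀ i, x i ∈ K) → ∀ i j : Fin n,
      (x i, x j, L.p i j) ∈ K ×ˢ K ×ˢ P := fun x hx i j => ⟨hx i, hx j, hpP _ _⟩
  obtain ⟨V, hV0, hV⟩ :=
    (hK.image_of_continuousOn L.val_cont.continuousOn).isBounded.exists_pos_norm_le
  obtain ⟨wmax, hwmax0, hwmax⟩ :=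
    (hQ.image_of_continuousOn L.w_cont.continuousOn).isBounded.exists_pos_norm_le
  obtain ⟨wmin, hwmin0, hwmin⟩ :=
    hQ.exists_forall_le' L.w_cont.continuousOn fun q _ => L.w_pos q.1 q.2.1 q.2.2
  rw [Set.forall_mem_image] at hV hwmax
  intro ε hε
  set ρ := wmin * ε / (2 * (wmax + 2 * V))
  obtain ⟨ηv, hηv, hv⟩ := Metric.uniformContinuousOn_iff_le.1
    (hK.uniformContinuousOn_of_continuous L.val_cont.continuousOn) ρ (by positivity)
  obtain ⟨ηw, hηw, hw⟩ := Metric.uniformContinuousOn_iff_le.1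
    (hQ.uniformContinuousOn_of_continuous L.w_cont.continuousOn) ρ (by positivity)
  set c := ⌈12 * V * wmax / (wmin * ε)⌉₊
  refine ⟨min ηv ηw, lt_min hηv hηw, c, fun {n} x x' hx hx' B hB j hj hcj => ?_⟩
  have hweight : ∀ (y : Fin n → Fin d → ℝ), (∀ i, y i ∈ K) → ∀ i,
      wmin ≤ L.w (y i) (y j) (L.p i j) ∧ L.w (y i) (y j) (L.p i j) ≤ wmax :=
    fun y hy i => ⟨hwmin _ (hmemQ y hy i j), (Real.le_norm_self _).trans (hwmax (hmemQ y hy i j))⟩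
  have hclose : ∀ i ∈ Iic j, i ∉ B →
      |L.w (x i) (x j) (L.p i j) - L.w (x' i) (x' j) (L.p i j)| ≤ ρ ∧
        ‖L.val (x i) - L.val (x' i)‖ ≤ ρ := by
    intro i _ hi
    have hxi : dist (x i) (x' i) ≤ min ηv ηw := hB i hi
    have hxj : dist (x j) (x' j) ≤ min ηv ηw := hB j hj
    refine ⟨?_, ?_⟩
    · rw [← Real.dist_eq]
      refine hw _ (hmemQ x hx i j) _ (hmemQ x' hx' i j) ?_
      simp only [Prod.dist_eq, dist_self]
      exact max_le (hxi.trans (min_le_right _ _))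
        (max_le (hxj.trans (min_le_right _ _)) hηw.le)
    · rw [← dist_eq_norm]
      exact hv _ (hx i) _ (hx' i) (hxi.trans (min_le_left _ _))
  -- `c` is chosen so that the `#B` perturbed positions contribute at most `ε / 2`.
  have hcB : 12 * V * wmax * #B ≤ (j + 1 : ℝ) * wmin * ε := by
    have hc : 12 * V * wmax ≤ c * (wmin * ε) := (div_le_iff₀ (by positivity)).1 (Nat.le_ceil _)
    have hcj' : (c * #B : ℝ) ≤ j := by exact_mod_cast hcj
    calc 12 * V * wmax * #B ≤ c * #B * (wmin * ε) := by nlinarith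
      _ ≤ (j + 1 : ℝ) * wmin * ε := by nlinarith [mul_pos hwmin0 hε]
  rw [dist_eq_norm]
  refine (norm_centerMass_sub_centerMass_le_of_sparse ⟨j, mem_Iic.2 le_rfl⟩ hwmin0
    (fun i _ => hweight x hx i) (fun i _ => hweight x' hx' i) (fun i _ => hV (hx i))
    (fun i _ => hV (hx' i)) (by positivity) hclose).trans ?_
  have hρ : ρ * (wmax + 2 * V) = wmin * ε / 2 := by
    simp only [ρ]; field_simp
  rw [Fin.card_Iic, div_le_iff₀ (by positivity), hρ]
  push_cast
  linarith

theorem sparseStable_apply (hL : L.CompactPE) {K : Set (Fin d → ℝ)} (hK : IsCompact K) :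
    SparseStable L.apply K := by
  obtain ⟨V, hV⟩ := hK.exists_bound_of_continuousOn L.val_cont.continuousOn
  exact ((L.sparseStable_attn hL hK).prod (SparseStable.id K)).comp_uniformContinuousOn
    (K' := Metric.closedBall 0 V ×ˢ K) (fun x hx j => ⟨L.seqMapsTo_attn_closedBall hV x hx j, hx j⟩)
    (((isCompact_closedBall 0 V).prod hK).uniformContinuousOn_of_continuous
      L.F_cont.continuousOn)

end AttentionLayer

theorem exists_isCompact_seqMapsTo_applyLayers {d : ℕ} (Ls : List (AttentionLayer d))
    {K : Set (Fin d → ℝ)} (hK : IsCompact K) :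
    ∃ K', IsCompact K' ∧ SeqMapsTo (applyLayers Ls) K K' := by
  induction Ls generalizing K with
  | nil => exact ⟨K, hK, fun _ hx => hx⟩
  | cons L Ls ih =>
    obtain ⟨K₁, hK₁, hLK₁⟩ := L.exists_isCompact_seqMapsTo_apply hK
    obtain ⟨K', hK', hLsK'⟩ := ih hK₁
    exact ⟨K', hK', fun x hx => hLsK' _ (hLK₁ x hx)⟩

theorem sparseStable_applyLayers {d : ℕ} (Ls : List (AttentionLayer d))
    (hLs : ∀ L ∈ Ls, L.CompactPE) {K : Set (Fin d → ℝ)} (hK : IsCompact K) :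
    SparseStable (applyLayers Ls) K := by
  induction Ls generalizing K with
  | nil => exact SparseStable.id K
  | cons L Ls ih =>
    obtain ⟨K₁, hK₁, hLK₁⟩ := L.exists_isCompact_seqMapsTo_apply hK
    exact (ih (fun L' hL' => hLs L' (List.mem_cons_of_mem L hL')) hK₁).comp
      (L.sparseStable_apply (hLs L List.mem_cons_self) hK) hLK₁

theorem Transformer.IsCompactT.dist_eval_le_of_sparse {A : Type*} [Fintype A] [DecidableEq A]
    {d : ℕ} {T : Transformer A d} (hT : T.IsCompactT) {ε : ℝ} (hε : 0 < ε) :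
    ∃ c : ℕ, ∀ {n : ℕ} (α β : Fin (n + 1) → A), α (Fin.last n) = β (Fin.last n) →
      c * #{i | α i ≠ β i} ≤ n → dist (T.eval α) (T.eval β) ≤ ε := by
  obtain ⟨⟨K, hK, hembed⟩, hLs⟩ := hT
  obtain ⟨K', hK', hLsK'⟩ := exists_isCompact_seqMapsTo_applyLayers T.layers hK
  obtain ⟨η, hη, c, hc⟩ := ((sparseStable_applyLayers T.layers hLs hK).comp_uniformContinuousOn
    hLsK' (hK'.uniformContinuousOn_of_continuous T.proj_cont.continuousOn)) ε hε
  refine ⟨c, fun {n} α β hlast hcard =>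
    hc _ _ (fun _ => hembed _ _) (fun _ => hembed _ _) _ ?_ (Fin.last n) ?_ hcard⟩
  · intro i hi
    simp only [mem_filter_univ, not_not] at hi
    simp [hi, hη.le]
  · simpa using hlast

open Classical in
theorem card_filter_two_pow_eq_succ_le {N m : ℕ} (h : N < 2 ^ m) :
    #{i : Fin N | ∃ t, 2 ^ t = (i : ℕ) + 1} ≤ m := by
  calc #{i : Fin N | ∃ t, 2 ^ t = (i : ℕ) + 1} ≤ #((range m).image fun t => 2 ^ t - 1) := by
        refine card_le_card_of_injOn Fin.val (fun i hi => ?_) Fin.val_injective.injOn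
        obtain ⟨t, ht⟩ := (mem_filter_univ _).1 hi
        have : 2 ^ t < 2 ^ m := by omega
        simp only [coe_image, coe_range, Set.mem_image, Set.mem_Iio]
        exact ⟨t, (Nat.pow_lt_pow_iff_right (by norm_num)).1 this, by omega⟩
    _ ≤ m := card_image_le.trans (card_range m).le

theorem not_exists_two_pow_eq_two_pow_sub_one {m : ℕ} (hm : 2 ≤ m) :
    ¬ ∃ t, 2 ^ t = 2 ^ m - 1 := by
  rintro ⟨t, ht⟩
  have h4 : 4 ≤ 2 ^ m := by simpa using Nat.pow_le_pow_right two_pos hm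
  rcases t with _ | t
  · omega
  · have : 2 ∣ 2 ^ m := dvd_pow_self 2 (by omega)
    rw [pow_succ] at ht
    omega

theorem eventually_mul_add_two_le_two_pow (c : ℕ) : ∀ᶠ m in atTop, c * m + 2 ≤ 2 ^ m := by
  filter_upwards [(isLittleO_coe_const_pow_of_one_lt (R := ℝ) one_lt_two).bound
    (c := 1 / (c + 2)) (by positivity), eventually_ge_atTop 1] with m hm hm1
  simp only [norm_natCast, norm_pow, Real.norm_ofNat] at hm
  have : ((c + 2) * m : ℝ) ≤ 2 ^ m := by
    rw [div_mul_eq_mul_div, one_mul, le_div_iff₀ (by positivity)] at hm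
    linarith
  have : (c + 2) * m ≤ 2 ^ m := by exact_mod_cast this
  nlinarith

/-- No compact decoder-only Transformer eventually learns both the all-zero sequence and
the indicator sequence of the powers of `2`. -/
theorem no_learn_zero_and_powers_of_two {A : Type*} [Fintype A] (zero one : A)
    (h01 : zero ≠ one) (α : ℕ → A)
    (hα : ∀ n : ℕ, 1 ≤ n →
      ((∃ m : ℕ, 2 ^ m = n) → α n = one) ∧ (¬ (∃ m : ℕ, 2 ^ m = n) → α n = zero))
    {d : ℕ} (T : Transformer A d) (hT : T.IsCompactT) :
    ¬ (EventuallyLearns T (fun _ => zero) ∧ EventuallyLearns T α) := by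
  classical
  rintro ⟨⟨ε₀, hε₀, n₀, hzero⟩, ⟨ε, hε, n₁, hpow⟩⟩
  obtain ⟨c, hc⟩ := hT.dist_eval_le_of_sparse (half_pos hε)
  obtain ⟨m, hcm, hm⟩ :=
    ((eventually_mul_add_two_le_two_pow c).and (eventually_ge_atTop (n₀ + n₁ + 2))).exists
  have hm_lt : m < 2 ^ m := Nat.lt_two_pow_self
  -- Predict position `2 ^ m` from the prefix of length `n + 1 = 2 ^ m - 1`.
  set n := 2 ^ m - 2
  have hlast : α (n + 1) = zero := (hα _ (by omega)).2 <| by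
    rw [show n + 1 = 2 ^ m - 1 by omega]; exact not_exists_two_pow_eq_two_pow_sub_one (by omega)
  have hnext : α (n + 2) = one := (hα _ (by omega)).1 ⟨m, by omega⟩
  have hsparse : #{i : Fin (n + 1) | α (i + 1) ≠ zero} ≤ m :=
    (card_le_card fun i hi => by
      simp only [mem_filter_univ] at hi ⊢
      by_contra h
      exact hi ((hα _ (by omega)).2 h)).trans (card_filter_two_pow_eq_succ_le (by omega))
  have hclose := hc (fun i : Fin (n + 1) => α (i + 1)) (fun _ => zero) hlast
    ((Nat.mul_le_mul_left c hsparse).trans (by omega))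
  have hmargin_pow := hpow n (by omega) zero (hnext ▸ h01)
  have hmargin_zero := hzero n (by omega) one h01.symm
  rw [hnext] at hmargin_pow
  have hdist_zero := (dist_le_pi_dist _ _ zero).trans hclose
  have hdist_one := (dist_le_pi_dist _ _ one).trans hclose
  rw [Real.dist_eq, abs_le] at hdist_zero hdist_one
  linarith [hdist_zero.1, hdist_one.2]
end
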